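/- arXiv:1904.02558 — 5 statements merged into one kernel-verified Lean document; each statement's English description precedes it below -/
import Mathlib

section
/- Let G be a nontrivial nonabelian simple group and let n ≥ 1. If N is a normal subgroup of the direct power G^n such that the quotient group G^n / N is isomorphic to G, then there exists an index k ∈ {0, …, n−1} such that N = {x ∈ G^n | x k = 1}, i.e. N is exactly the kernel of the k-th coordinate projection (equivalently, N = G^k × {1} × G^{n−k−1}). (This is the generalization, noted in the paper's remark, of Lemma 'lem-simple'.) -/
/-!
Compose the quotient map with the isomorphism to get a surjection `φ : G^n → G` with kernel `N`,
and restrict `φ` to the coordinate copies of `G`. Each restriction has normal image, hence trivial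
or all of `G`. Two full images would commute elementwise, which `G` does not allow, and not all
images can be trivial since the copies generate `G^n`. So `φ` factors through a single projection
`p_k`, followed by a nontrivial, hence injective, endomorphism of the simple group `G`.
-/

namespace MonoidHom

variable {ι : Type*} [DecidableEq ι] {G : ι → Type*} [∀ i, Group (G i)] {H : Type*} [Group H]

theorem injective_of_ne_one {K : Type*} [Group K] [IsSimpleGroup K] {f : K →* H} (hf : f ≠ 1) :
    Function.Injective f :=
  f.ker_eq_bot_iff.mp <| f.normal_ker.eq_bot_or_eq_top.resolve_right (ker_eq_top_iff.not.mpr hf)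

theorem normal_range_mulSingle (i : ι) : (MonoidHom.mulSingle G i).range.Normal where
  conj_mem := by
    rintro _ ⟨a, rfl⟩ y
    refine ⟨y i * a * (y i)⁻¹, funext fun j => ?_⟩
    obtain rfl | hj := eq_or_ne j i
    · simp
    · simp [Pi.mulSingle_eq_of_ne hj]

theorem range_comp_mulSingle_eq_bot_or_eq_top [IsSimpleGroup H] {φ : (∀ i, G i) →* H}
    (hφ : Function.Surjective φ) (i : ι) :
    (φ.comp (mulSingle G i)).range = ⊥ ∨ (φ.comp (mulSingle G i)).range = ⊤ := by
  rw [range_comp]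
  exact ((normal_range_mulSingle i).map φ hφ).eq_bot_or_eq_top

theorem commute_of_range_comp_mulSingle_eq_top (φ : (∀ i, G i) →* H) {i j : ι} (hij : i ≠ j)
    (hi : (φ.comp (mulSingle G i)).range = ⊤) (hj : (φ.comp (mulSingle G j)).range = ⊤)
    (a b : H) : Commute a b := by
  obtain ⟨a, rfl⟩ := range_eq_top.mp hi a
  obtain ⟨b, rfl⟩ := range_eq_top.mp hj b
  exact (Pi.mulSingle_commute hij a b).map φ

theorem exists_eq_comp_evalMonoidHom [Finite ι] [IsSimpleGroup H]
    (hH : ∃ a b : H, a * b ≠ b * a) {φ : (∀ i, G i) →* H} (hφ : Function.Surjective φ) :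
    ∃ k, φ.comp (mulSingle G k) ≠ 1 ∧ φ = (φ.comp (mulSingle G k)).comp (Pi.evalMonoidHom G k) := by
  have hφ1 : φ ≠ 1 := by
    obtain ⟨a, b, hab⟩ := hH
    rintro rfl
    obtain ⟨x, rfl⟩ := hφ a
    exact hab (by simp)
  obtain ⟨k, hk⟩ : ∃ k, φ.comp (mulSingle G k) ≠ 1 := by
    by_contra! h
    exact hφ1 (pi_ext fun i x => by simpa using congr($(h i) x))
  have hk_top : (φ.comp (mulSingle G k)).range = ⊤ :=
    (range_comp_mulSingle_eq_bot_or_eq_top hφ k).resolve_left (range_eq_bot_iff.not.mpr hk)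
  have h_other : ∀ j ≠ k, φ.comp (mulSingle G j) = 1 := by
    intro j hj
    refine range_eq_bot_iff.mp ((range_comp_mulSingle_eq_bot_or_eq_top hφ j).resolve_right ?_)
    intro hj_top
    obtain ⟨a, b, hab⟩ := hH
    exact hab (commute_of_range_comp_mulSingle_eq_top φ hj hj_top hk_top a b).eq
  refine ⟨k, hk, pi_ext fun i x => ?_⟩
  obtain rfl | hi := eq_or_ne i k
  · simp
  · simpa [Pi.mulSingle_eq_of_ne hi.symm] using congr($(h_other i hi) x)

theorem exists_ker_eq_ker_evalMonoidHom [Finite ι] [∀ i, IsSimpleGroup (G i)] [IsSimpleGroup H]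
    (hH : ∃ a b : H, a * b ≠ b * a) {φ : (∀ i, G i) →* H} (hφ : Function.Surjective φ) :
    ∃ k, φ.ker = (Pi.evalMonoidHom G k).ker := by
  obtain ⟨k, hk, hφk⟩ := exists_eq_comp_evalMonoidHom hH hφ
  exact ⟨k, hφk ▸ ker_comp_of_injective _ _ (injective_of_ne_one hk)⟩

end MonoidHom

theorem normal_subgroup_of_pi_quotient_iso_self_general
    {G : Type*} [Group G] [IsSimpleGroup G]
    (hnonab : ∃ a b : G, a * b ≠ b * a)
    (n : ℕ)
    (N : Subgroup (Fin n → G)) [N.Normal]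
    (hiso : Nonempty (((Fin n → G) ⧸ N) ≃* G)) :
    ∃ k : Fin n, N = (Pi.evalMonoidHom (fun _ : Fin n => G) k).ker := by
  obtain ⟨e⟩ := hiso
  have hsurj : Function.Surjective (e.toMonoidHom.comp (QuotientGroup.mk' N)) :=
    e.surjective.comp (QuotientGroup.mk'_surjective N)
  obtain ⟨k, hk⟩ := MonoidHom.exists_ker_eq_ker_evalMonoidHom hnonab hsurj
  refine ⟨k, ?_⟩
  rw [← hk, MonoidHom.ker_comp_of_injective _ _ e.injective, QuotientGroup.ker_mk']

/-- Generalized Lemma `lem-simple`: if `G` is a nontrivial nonabelian simple group and `N` is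
a normal subgroup of `G^n` (realized as `Fin n → G`) whose quotient is isomorphic to `G`,
then `N` is the kernel of some coordinate projection. -/
theorem normal_subgroup_of_pi_quotient_iso_self
    {G : Type*} [Group G] [IsSimpleGroup G]
    (hnonab : ∃ a b : G, a * b ≠ b * a)
    (n : ℕ) (hn : 1 ≤ n)
    (N : Subgroup (Fin n → G)) [N.Normal]
    (hiso : Nonempty (((Fin n → G) ⧸ N) ≃* G)) :
    ∃ k : Fin n, N = (Pi.evalMonoidHom (fun _ : Fin n => G) k).ker :=
  normal_subgroup_of_pi_quotient_iso_self_general hnonab n N hiso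
end

section
/- Let G be a nonabelian simple group, n ≥ 1, and let N be a normal subgroup of the direct power G^n whose projection to the k-th coordinate is surjective, i.e. p_k(N) = G. Then N contains the k-th factor of G^n: for every g ∈ G, the element of G^n whose k-th coordinate is g and whose other coordinates are the identity belongs to N. -/
/-!
For `x ∈ N` and `b ∈ G`, the commutator `⁅x, mulSingle k b⁆` lies in `N` by normality and equals
`mulSingle k ⁅x k, b⁆`. As `x k` ranges over all of `G`, the `k`-th factor meets `N` in a subgroup
containing `⁅G, G⁆`, which is all of `G` because a nonabelian simple group is perfect.
-/

open scoped commutatorElement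

theorem IsSimpleGroup.isPerfect {G : Type*} [Group G] [IsSimpleGroup G]
    (hnonab : ∃ a b : G, a * b ≠ b * a) : Group.IsPerfect G := by
  refine ⟨(IsSimpleGroup.eq_bot_or_eq_top_of_normal _ inferInstance).resolve_left fun hbot => ?_⟩
  obtain ⟨a, b, hab⟩ := hnonab
  have hcomm : ⁅a, b⁆ ∈ commutator G :=
    Subgroup.commutator_mem_commutator (Subgroup.mem_top a) (Subgroup.mem_top b)
  rw [hbot, Subgroup.mem_bot, commutatorElement_eq_one_iff_mul_comm] at hcomm
  exact hab hcomm

theorem Pi.commutatorElement_mulSingle_right {ι : Type*} [DecidableEq ι] {G : ι → Type*}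
    [∀ i, Group (G i)] (x : ∀ i, G i) (k : ι) (b : G k) :
    ⁅x, Pi.mulSingle k b⁆ = Pi.mulSingle k ⁅x k, b⁆ := by
  ext j
  obtain rfl | hj := eq_or_ne j k
  · simp [commutatorElement_def]
  · simp [commutatorElement_def, Pi.mulSingle_eq_of_ne hj]

theorem Subgroup.commutator_map_eval_top_le_comap_mulSingle {ι : Type*} [DecidableEq ι]
    {G : ι → Type*} [∀ i, Group (G i)] (N : Subgroup (∀ i, G i)) [N.Normal] (k : ι) :
    ⁅N.map (Pi.evalMonoidHom G k), ⊤⁆ ≤ N.comap (MonoidHom.mulSingle G k) := by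
  rw [Subgroup.commutator_le]
  rintro _ ⟨x, hx, rfl⟩ b -
  change Pi.mulSingle k ⁅x k, b⁆ ∈ N
  rw [← Pi.commutatorElement_mulSingle_right]
  exact Subgroup.commutator_le_left N ⊤ (Subgroup.commutator_mem_commutator hx (mem_top _))

theorem normal_subgroup_pi_contains_factor_of_surjective_projection_general
    {G : Type*} [Group G] [IsSimpleGroup G]
    (hnonab : ∃ a b : G, a * b ≠ b * a)
    (n : ℕ) (k : Fin n)
    (N : Subgroup (Fin n → G)) [N.Normal]
    (hsurj : N.map (Pi.evalMonoidHom (fun _ : Fin n => G) k) = ⊤) :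
    ∀ g : G, Pi.mulSingle k g ∈ N := by
  have : Group.IsPerfect G := IsSimpleGroup.isPerfect hnonab
  have hle := N.commutator_map_eval_top_le_comap_mulSingle k
  rw [hsurj] at hle
  exact fun g => hle Group.IsPerfect.mem_commutator

/-- If a normal subgroup `N` of `G^n` (with `G` nonabelian simple) projects onto the `k`-th
factor, then `N` contains the whole `k`-th factor. -/
theorem normal_subgroup_pi_contains_factor_of_surjective_projection
    {G : Type*} [Group G] [IsSimpleGroup G]
    (hnonab : ∃ a b : G, a * b ≠ b * a)
    (n : ℕ) (hn : 1 ≤ n) (k : Fin n)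
    (N : Subgroup (Fin n → G)) [N.Normal]
    (hsurj : N.map (Pi.evalMonoidHom (fun _ : Fin n => G) k) = ⊤) :
    ∀ g : G, Pi.mulSingle k g ∈ N :=
  normal_subgroup_pi_contains_factor_of_surjective_projection_general hnonab n k N hsurj
end

section
/- Let G be a nonabelian simple group and n ≥ 1. Then every normal subgroup N of the direct power G^n is a sub-product of factors: there exists a set s of indices in {0, …, n−1} such that N = {x ∈ G^n | x i = 1 for all i ∈ s}. (This is the classification of normal subgroups of G^n established in the course of the proof of Lemma 'lem-simple'.) -/
/-!
The center of a nonabelian simple group is trivial. So if some `y ∈ N` has `y i ≠ 1`, there is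
`g` with `⁅g, y i⁆ ≠ 1`, and `⁅mulSingle i g, y⁆ = mulSingle i ⁅g, y i⁆` is a nontrivial element
of `N` supported on coordinate `i`. Hence the preimage of `N` under the `i`-th inclusion is a
nontrivial normal subgroup of the simple factor, i.e. the whole factor. Every coordinate is thus
either killed by `N` or entirely contained in it, and `N` is generated by its single-coordinate
elements.
-/

open Subgroup
open scoped commutatorElement

theorem IsSimpleGroup.center_eq_bot {G : Type*} [Group G] [IsSimpleGroup G]
    (hnonab : ∃ a b : G, a * b ≠ b * a) : center G = ⊥ :=
  (center G).normal_of_characteristic.eq_bot_or_eq_top.resolve_right fun h => by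
    obtain ⟨a, b, hab⟩ := hnonab
    exact hab (mem_center_iff.mp (h ▸ mem_top a) b).symm

theorem Subgroup.exists_commutatorElement_ne_one_of_center_eq_bot {G : Type*} [Group G]
    (hG : center G = ⊥) {a : G} (ha : a ≠ 1) : ∃ g : G, ⁅g, a⁆ ≠ 1 := by
  by_contra! h
  have ha_center : a ∈ center G :=
    mem_center_iff.mpr fun g => commutatorElement_eq_one_iff_mul_comm.mp (h g)
  exact ha (mem_bot.mp (hG ▸ ha_center))

theorem Pi.commutatorElement_mulSingle {ι : Type*} [DecidableEq ι] {G : ι → Type*}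
    [∀ i, Group (G i)] (i : ι) (g : G i) (y : ∀ i, G i) :
    ⁅Pi.mulSingle i g, y⁆ = Pi.mulSingle i ⁅g, y i⁆ := by
  ext j
  rcases eq_or_ne j i with rfl | hj
  · simp [commutatorElement_def]
  · simp [commutatorElement_def, hj]

namespace Subgroup

variable {ι : Type*} [DecidableEq ι] {G : ι → Type*} [∀ i, Group (G i)]
  (N : Subgroup (∀ i, G i)) [N.Normal]

theorem mulSingle_mem_of_apply_ne_one {y : ∀ i, G i} (hy : y ∈ N) {i : ι} (hyi : y i ≠ 1)
    [IsSimpleGroup (G i)] (hG : center (G i) = ⊥) (g : G i) : Pi.mulSingle i g ∈ N := by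
  obtain ⟨h, hh⟩ := exists_commutatorElement_ne_one_of_center_eq_bot hG hyi
  have hcomm : ⁅h, y i⁆ ∈ N.comap (MonoidHom.mulSingle G i) := by
    rw [mem_comap, MonoidHom.mulSingle_apply, ← Pi.commutatorElement_mulSingle,
      commutatorElement_def]
    exact N.mul_mem (‹N.Normal›.conj_mem y hy _) (N.inv_mem hy)
  have htop : N.comap (MonoidHom.mulSingle G i) = ⊤ :=
    (Normal.eq_bot_or_eq_top inferInstance).resolve_left fun hbot =>
      hh (mem_bot.mp (hbot ▸ hcomm))
  exact mem_comap.mp (htop ▸ mem_top g)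

theorem mem_iff_forall_apply_eq_one_of_center_eq_bot [Finite ι] [∀ i, IsSimpleGroup (G i)]
    (hG : ∀ i, center (G i) = ⊥) (x : ∀ i, G i) :
    x ∈ N ↔ ∀ i ∈ {i | ∀ y ∈ N, y i = 1}, x i = 1 := by
  refine ⟨fun hx i hi => hi x hx, fun hx => pi_mem_of_mulSingle_mem x fun i => ?_⟩
  by_cases hi : ∀ y ∈ N, y i = 1
  · simp [hx i hi, N.one_mem]
  · push Not at hi
    obtain ⟨y, hy, hyi⟩ := hi
    exact mulSingle_mem_of_apply_ne_one N hy hyi (hG i) (x i)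

end Subgroup

theorem normal_subgroup_pi_eq_subproduct_general
    {G : Type*} [Group G] [IsSimpleGroup G]
    (hnonab : ∃ a b : G, a * b ≠ b * a)
    (n : ℕ)
    (N : Subgroup (Fin n → G)) [N.Normal] :
    ∃ s : Set (Fin n), ∀ x : Fin n → G, x ∈ N ↔ ∀ i ∈ s, x i = 1 :=
  ⟨_, N.mem_iff_forall_apply_eq_one_of_center_eq_bot
    (fun _ => IsSimpleGroup.center_eq_bot hnonab)⟩

/-- Classification of normal subgroups of `G^n` for `G` nonabelian simple: every normal
subgroup is the set of tuples vanishing on a given set of coordinates. -/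
theorem normal_subgroup_pi_eq_subproduct
    {G : Type*} [Group G] [IsSimpleGroup G]
    (hnonab : ∃ a b : G, a * b ≠ b * a)
    (n : ℕ) (hn : 1 ≤ n)
    (N : Subgroup (Fin n → G)) [N.Normal] :
    ∃ s : Set (Fin n), ∀ x : Fin n → G, x ∈ N ↔ ∀ i ∈ s, x i = 1 :=
  normal_subgroup_pi_eq_subproduct_general hnonab n N
end

section
/- Let G be a nontrivial simple group, n ≥ 2, and let N be a normal subgroup of the direct power G^n. If there exist two distinct indices i ≠ j such that the projection of N to the i-th coordinate and the projection of N to the j-th coordinate are both trivial, then the quotient G^n / N is not isomorphic to G. (This is the step in the proof of Lemma 'lem-simple' showing that at most one coordinate projection of N can be trivial.) -/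
/-!
Projecting to the coordinates `i` and `j` gives a surjection `G^n → G × G` that kills `N`, hence
a surjection `G^n / N → G × G`. If `G^n / N ≅ G`, the simple group `G` would surject onto
`G × G`, which is not simple since `G × 1` is a proper nontrivial normal subgroup.
-/

theorem IsSimpleGroup.not_prod {G H : Type*} [Group G] [Group H] [Nontrivial G] [Nontrivial H] :
    ¬ IsSimpleGroup (G × H) := by
  intro hGH
  obtain ⟨g, hg⟩ := exists_ne (1 : G)
  obtain ⟨h, hh⟩ := exists_ne (1 : H)
  rcases hGH.eq_bot_or_eq_top_of_normal ((⊤ : Subgroup G).prod (⊥ : Subgroup H)) inferInstance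
    with hbot | htop
  · exact bot_ne_top (Subgroup.prod_eq_bot_iff.1 hbot).1.symm
  · have : ((1 : G), h) ∈ (⊤ : Subgroup G).prod ⊥ := htop ▸ Subgroup.mem_top _
    exact hh this.2

theorem Pi.evalMonoidHom_prod_surjective {ι : Type*} [DecidableEq ι] {M : ι → Type*}
    [∀ k, MulOneClass (M k)] {i j : ι} (hij : i ≠ j) :
    Function.Surjective ((Pi.evalMonoidHom M i).prod (Pi.evalMonoidHom M j)) := by
  rintro ⟨a, b⟩
  refine ⟨Pi.mulSingle i a * Pi.mulSingle j b, ?_⟩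
  simp [hij, hij.symm]

theorem quotient_not_iso_of_two_trivial_projections_general
    {G : Type*} [Group G] [IsSimpleGroup G]
    (n : ℕ)
    (N : Subgroup (Fin n → G)) [N.Normal]
    (i j : Fin n) (hij : i ≠ j)
    (hi : N.map (Pi.evalMonoidHom (fun _ : Fin n => G) i) = ⊥)
    (hj : N.map (Pi.evalMonoidHom (fun _ : Fin n => G) j) = ⊥) :
    ¬ Nonempty (((Fin n → G) ⧸ N) ≃* G) := by
  rintro ⟨e⟩
  let ψ := (Pi.evalMonoidHom (fun _ : Fin n => G) i).prod (Pi.evalMonoidHom _ j)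
  have hN : N ≤ ψ.ker := by
    rw [MonoidHom.ker_prod]
    exact le_inf (Subgroup.map_eq_bot_iff N |>.1 hi) (Subgroup.map_eq_bot_iff N |>.1 hj)
  have hsurj : Function.Surjective ((QuotientGroup.lift N ψ hN).comp e.symm.toMonoidHom) :=
    (QuotientGroup.lift_surjective_of_surjective N ψ
      (Pi.evalMonoidHom_prod_surjective hij) hN).comp e.symm.surjective
  exact IsSimpleGroup.not_prod (IsSimpleGroup.isSimpleGroup_of_surjective _ hsurj)

/-- If a normal subgroup `N` of `G^n` (with `G` nontrivial simple, `n ≥ 2`) has trivial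
projection to two distinct coordinates, then `G^n / N` is not isomorphic to `G`. -/
theorem quotient_not_iso_of_two_trivial_projections
    {G : Type*} [Group G] [IsSimpleGroup G]
    (n : ℕ) (hn : 2 ≤ n)
    (N : Subgroup (Fin n → G)) [N.Normal]
    (i j : Fin n) (hij : i ≠ j)
    (hi : N.map (Pi.evalMonoidHom (fun _ : Fin n => G) i) = ⊥)
    (hj : N.map (Pi.evalMonoidHom (fun _ : Fin n => G) j) = ⊥) :
    ¬ Nonempty (((Fin n → G) ⧸ N) ≃* G) :=
  quotient_not_iso_of_two_trivial_projections_general n N i j hij hi hj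
end

section
/- Let X be a measurable space, f : X → X a measurable map, and let μ and ν be two distinct probability measures on X, each of which is invariant and ergodic for f. Then μ and ν are mutually singular. -/
/-!
The singular part of `μ` with respect to `ν` is an invariant measure dominated by `μ`, so by
ergodicity of `μ` it is a constant multiple `c • μ`. If `c = 0` then `μ ≪ ν`, and ergodicity of
`ν` forces `μ = ν`; otherwise `μ ≪ c • μ ⟂ ν`.
-/

open MeasureTheory Measure

theorem Ergodic.absolutelyContinuous_or_mutuallySingular {X : Type*} [MeasurableSpace X]
    {f : X → X} {μ ν : Measure X} [IsFiniteMeasure μ] [SigmaFinite ν] (hμ : Ergodic f μ)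
    (hν : MeasurePreserving f ν ν) : μ ≪ ν ∨ μ ⟂ₘ ν := by
  obtain ⟨c, hc⟩ := hμ.eq_smul_of_absolutelyContinuous
    (hμ.toMeasurePreserving.singularPart hν) (singularPart_le μ ν).absolutelyContinuous
  rcases eq_or_ne c 0 with rfl | hc₀
  · left
    rw [zero_smul, singularPart_eq_zero] at hc
    exact hc
  · right
    exact (hc ▸ mutuallySingular_singularPart μ ν).mono_ac (absolutelyContinuous_smul hc₀)
      .rfl

theorem ergodic_distinct_mutuallySingular_general
    {X : Type*} [MeasurableSpace X] (f : X → X)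
    (μ ν : Measure X) [IsProbabilityMeasure μ] [IsProbabilityMeasure ν]
    (hμ : Ergodic f μ) (hν : Ergodic f ν) (hne : μ ≠ ν) :
    μ ⟂ₘ ν := by
  refine (hμ.absolutelyContinuous_or_mutuallySingular hν.toMeasurePreserving).resolve_left ?_
  exact fun hac ↦ hne (hν.eq_of_absolutelyContinuous hμ.toMeasurePreserving hac)

/-- Two distinct ergodic invariant probability measures for a measurable map are
mutually singular. -/
theorem ergodic_distinct_mutuallySingular
    {X : Type*} [MeasurableSpace X] (f : X → X) (hf : Measurable f)
    (μ ν : Measure X) [IsProbabilityMeasure μ] [IsProbabilityMeasure ν]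
    (hμ : Ergodic f μ) (hν : Ergodic f ν) (hne : μ ≠ ν) :
    μ ⟂ₘ ν :=
  ergodic_distinct_mutuallySingular_general f μ ν hμ hν hne
end
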